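/- Suppose some asset j ∈ {1, ..., m} is dominant. If K ∈ 𝒦 is any market portfolio with strictly positive weight on every asset, i.e. K_i > 0 for all i = 1, ..., m, then buying and holding K is asymptotically log-optimal: lim_{n → ∞} g_n(K) = g_1*, where g_1* = E[log(1 + X_j(0))]. -/

import Mathlib

open MeasureTheory ProbabilityTheory Filter Topology Finset Real

/-- Compound (total) return of asset `i` over the first `n` periods:
`R_{n,i}(ω) = ∏_{k=0}^{n-1} (1 + X_i(k)(ω))`. -/
noncomputable def compoundReturn {Ω : Type*} {m : ℕ} (X : ℕ → Ω → Fin m → ℝ)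
    (n : ℕ) (ω : Ω) (i : Fin m) : ℝ :=
  ∏ k ∈ Finset.range n, (1 + X k ω i)

/-- Expected logarithmic growth with rebalancing period `n`:
`g_n(K) = (1/n) E[log (Kᵀ R_n)]`. -/
noncomputable def elg {Ω : Type*} [MeasureSpace Ω] {m : ℕ} (X : ℕ → Ω → Fin m → ℝ)
    (n : ℕ) (K : Fin m → ℝ) : ℝ :=
  (n : ℝ)⁻¹ * ∫ ω, Real.log (∑ i, K i * compoundReturn X n ω i)

/-- The admissible set: the unit simplex in `ℝ^m`. -/
def simplex (m : ℕ) : Set (Fin m → ℝ) := {K | (∀ i, 0 ≤ K i) ∧ ∑ i, K i = 1}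

/-!
Write `S_n = Kᵀ R_n` and `g* = E[log(1 + X_j(0))]`. Since `S_n ≥ K_j R_{n,j}` and
`E[log R_{n,j}] = n g*`, we get `E[log S_n] ≥ log K_j + n g*`. Conversely
`log S_n ≤ log R_{n,j} + S_n / R_{n,j} - 1` by `log x ≤ x - 1`, and by independence
`E[R_{n,i} / R_{n,j}] = (E[(1 + X_i(0)) / (1 + X_j(0))])^n ≤ 1` by dominance, so
`E[S_n / R_{n,j}] ≤ ∑ K_i = 1` and `E[log S_n] ≤ n g*`. Dividing by `n` squeezes `g_n(K)` to `g*`.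
-/

lemma log_le_log_add_div_sub_one {a b : ℝ} (ha : 0 < a) (hb : 0 < b) :
    log b ≤ log a + (b / a - 1) := by
  have h := log_le_sub_one_of_pos (div_pos hb ha)
  rw [log_div hb.ne' ha.ne'] at h
  linarith

lemma tendsto_inv_mul_of_le_of_le {b : ℕ → ℝ} {c g : ℝ} (hlow : ∀ n : ℕ, c + n * g ≤ b n)
    (hup : ∀ n : ℕ, b n ≤ n * g) :
    Tendsto (fun n : ℕ => (n : ℝ)⁻¹ * b n) atTop (𝓝 g) := by
  have hc : Tendsto (fun n : ℕ => c / n + g) atTop (𝓝 g) := by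
    simpa using (tendsto_const_div_atTop_nhds_zero_nat c).add_const g
  refine tendsto_of_tendsto_of_tendsto_of_le_of_le' hc tendsto_const_nhds ?_ ?_ <;>
    filter_upwards [eventually_gt_atTop 0] with n hn <;>
    have hn : (0 : ℝ) < n := by exact_mod_cast hn
  · rw [le_inv_mul_iff₀ hn, mul_add, mul_div_cancel₀ _ hn.ne']
    linarith [hlow n]
  · rw [inv_mul_le_iff₀ hn]
    linarith [hup n]

section WeightedSum

variable {ι : Type*} [Fintype ι] {K r : ι → ℝ}

lemma mul_le_sum_mul (hK : ∀ i, 0 ≤ K i) (hr : ∀ i, 0 ≤ r i) (j : ι) :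
    K j * r j ≤ ∑ i, K i * r i :=
  single_le_sum (fun i _ => mul_nonneg (hK i) (hr i)) (mem_univ j)

lemma log_add_log_le_log_sum_mul (hK : ∀ i, 0 ≤ K i) (hr : ∀ i, 0 < r i) {j : ι}
    (hKj : 0 < K j) : log (K j) + log (r j) ≤ log (∑ i, K i * r i) := by
  rw [← log_mul hKj.ne' (hr j).ne']
  exact log_le_log (mul_pos hKj (hr j)) (mul_le_sum_mul hK (fun i => (hr i).le) j)

lemma log_sum_mul_le (hK : ∀ i, 0 ≤ K i) (hr : ∀ i, 0 < r i) {j : ι} (hKj : 0 < K j) :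
    log (∑ i, K i * r i) ≤ log (r j) + (∑ i, K i * (r i / r j) - 1) := by
  simp_rw [← mul_div_assoc, ← sum_div]
  exact log_le_log_add_div_sub_one (hr j)
    ((mul_pos hKj (hr j)).trans_le (mul_le_sum_mul hK (fun i => (hr i).le) j))

end WeightedSum

section CompoundReturn

variable {Ω : Type*} {m : ℕ} {X : ℕ → Ω → Fin m → ℝ} {ω : Ω} {i : Fin m}

lemma compoundReturn_mem_Icc {a b : ℝ} (ha : 0 ≤ a) (h : ∀ k, a ≤ 1 + X k ω i ∧ 1 + X k ω i ≤ b)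
    (n : ℕ) : compoundReturn X n ω i ∈ Set.Icc (a ^ n) (b ^ n) :=
  ⟨by simpa [compoundReturn] using prod_le_prod (s := range n) (fun _ _ => ha) fun k _ => (h k).1,
    by simpa [compoundReturn] using
      prod_le_prod (s := range n) (fun k _ => ha.trans (h k).1) fun k _ => (h k).2⟩

lemma compoundReturn_pos (h : ∀ k, 0 < 1 + X k ω i) (n : ℕ) : 0 < compoundReturn X n ω i :=
  prod_pos fun k _ => h k

lemma log_compoundReturn (h : ∀ k, 0 < 1 + X k ω i) (n : ℕ) :
    log (compoundReturn X n ω i) = ∑ k ∈ range n, log (1 + X k ω i) :=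
  log_prod fun k _ => (h k).ne'

lemma compoundReturn_div_compoundReturn (n : ℕ) (i j : Fin m) :
    compoundReturn X n ω i / compoundReturn X n ω j =
      ∏ k ∈ range n, (1 + X k ω i) / (1 + X k ω j) :=
  (prod_div_distrib ..).symm

lemma aemeasurable_compoundReturn [MeasurableSpace Ω] {μ : Measure Ω}
    (hX : ∀ k, AEMeasurable (X k) μ) (n : ℕ) (i : Fin m) :
    AEMeasurable (fun ω => compoundReturn X n ω i) μ := by
  unfold compoundReturn
  fun_prop

end CompoundReturn

section IdentDistrib

variable {Ω β : Type*} [MeasurableSpace Ω] [MeasurableSpace β] {μ : Measure Ω}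
  {X : ℕ → Ω → β} {f : β → ℝ}

lemma integral_sum_range_comp_eq_mul (hident : ∀ k, IdentDistrib (X k) (X 0) μ μ)
    (hf : Measurable f) (hint : Integrable (fun ω => f (X 0 ω)) μ) (n : ℕ) :
    ∫ ω, ∑ k ∈ range n, f (X k ω) ∂μ = n * ∫ ω, f (X 0 ω) ∂μ := by
  have hcomp k : IdentDistrib (fun ω => f (X k ω)) (fun ω => f (X 0 ω)) μ μ :=
    (hident k).comp hf
  rw [integral_finsetSum _ fun k _ => (hcomp k).integrable_iff.2 hint]
  simp [(hcomp _).integral_eq]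

lemma integral_prod_range_comp_eq_pow (hindep : iIndepFun X μ)
    (hident : ∀ k, IdentDistrib (X k) (X 0) μ μ) (hf : Measurable f) (n : ℕ) :
    ∫ ω, ∏ k ∈ range n, f (X k ω) ∂μ = (∫ ω, f (X 0 ω) ∂μ) ^ n := by
  have hrestrict : iIndepFun (fun k : Fin n => X k) μ := hindep.precomp Fin.val_injective
  have hcomp k : IdentDistrib (fun ω => f (X k ω)) (fun ω => f (X 0 ω)) μ μ :=
    (hident k).comp hf
  calc ∫ ω, ∏ k ∈ range n, f (X k ω) ∂μ = ∫ ω, ∏ k : Fin n, f (X k ω) ∂μ := by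
        congr 1 with ω
        exact (Fin.prod_univ_eq_prod_range (fun k => f (X k ω)) n).symm
    _ = ∏ k : Fin n, ∫ ω, f (X k ω) ∂μ :=
        hrestrict.integral_fun_prod_comp (fun k => (hident k).aemeasurable_fst)
          fun _ => hf.aestronglyMeasurable
    _ = (∫ ω, f (X 0 ω) ∂μ) ^ n := by simp [(hcomp _).integral_eq]

end IdentDistrib

section Market

variable {Ω : Type*} [MeasureSpace Ω] [IsProbabilityMeasure (ℙ : Measure Ω)] {m : ℕ}
  {X : ℕ → Ω → Fin m → ℝ} {a b K : Fin m → ℝ} {j : Fin m}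

lemma integrable_log_one_add (hX : ∀ k, AEMeasurable (X k)) (ha : ∀ i, 0 < a i)
    (hab : ∀ᵐ ω, ∀ k i, a i ≤ 1 + X k ω i ∧ 1 + X k ω i ≤ b i) (k : ℕ) (i : Fin m) :
    Integrable (fun ω => log (1 + X k ω i)) := by
  refine .of_mem_Icc (log (a i)) (log (b i)) (by fun_prop) ?_
  filter_upwards [hab] with ω hω
  exact ⟨log_le_log (ha i) (hω k i).1, log_le_log ((ha i).trans_le (hω k i).1) (hω k i).2⟩

lemma integrable_log_portfolio (hX : ∀ k, AEMeasurable (X k)) (ha : ∀ i, 0 < a i)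
    (hab : ∀ᵐ ω, ∀ k i, a i ≤ 1 + X k ω i ∧ 1 + X k ω i ≤ b i) (hK : ∀ i, 0 ≤ K i)
    (hKj : 0 < K j) (n : ℕ) :
    Integrable (fun ω => log (∑ i, K i * compoundReturn X n ω i)) := by
  have hR_meas := aemeasurable_compoundReturn hX n
  refine .of_mem_Icc (log (K j * a j ^ n)) (log (∑ i, K i * b i ^ n)) (by fun_prop) ?_
  filter_upwards [hab] with ω hω
  have hR i := compoundReturn_mem_Icc (ha i).le (hω · i) n
  have hlow : K j * a j ^ n ≤ ∑ i, K i * compoundReturn X n ω i :=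
    (mul_le_mul_of_nonneg_left (hR j).1 (hK j)).trans <|
      mul_le_sum_mul hK (fun i => (pow_pos (ha i) n).le.trans (hR i).1) j
  have hlow_pos : 0 < K j * a j ^ n := mul_pos hKj (pow_pos (ha j) n)
  exact ⟨log_le_log hlow_pos hlow, log_le_log (hlow_pos.trans_le hlow)
    (sum_le_sum fun i _ => mul_le_mul_of_nonneg_left (hR i).2 (hK i))⟩

lemma integrable_compoundReturn_div (hX : ∀ k, AEMeasurable (X k)) (ha : ∀ i, 0 < a i)
    (hab : ∀ᵐ ω, ∀ k i, a i ≤ 1 + X k ω i ∧ 1 + X k ω i ≤ b i) (n : ℕ) (i : Fin m) :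
    Integrable (fun ω => compoundReturn X n ω i / compoundReturn X n ω j) := by
  have hR_meas := aemeasurable_compoundReturn hX n
  refine .of_mem_Icc 0 (b i ^ n / a j ^ n) (by fun_prop) ?_
  filter_upwards [hab] with ω hω
  have hR l := compoundReturn_mem_Icc (ha l).le (hω · l) n
  have hR_nonneg l : 0 ≤ compoundReturn X n ω l := (pow_pos (ha l) n).le.trans (hR l).1
  exact ⟨div_nonneg (hR_nonneg i) (hR_nonneg j),
    div_le_div₀ ((hR_nonneg i).trans (hR i).2) (hR i).2 (pow_pos (ha j) n) (hR j).1⟩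

lemma log_add_mul_le_integral_log_portfolio (hident : ∀ k, IdentDistrib (X k) (X 0) ℙ ℙ)
    (ha : ∀ i, 0 < a i) (hab : ∀ᵐ ω, ∀ k i, a i ≤ 1 + X k ω i ∧ 1 + X k ω i ≤ b i)
    (hK : ∀ i, 0 ≤ K i) (hKj : 0 < K j) (n : ℕ) :
    log (K j) + n * ∫ ω, log (1 + X 0 ω j) ≤
      ∫ ω, log (∑ i, K i * compoundReturn X n ω i) := by
  have hX k := (hident k).aemeasurable_fst
  have hlog : Integrable (fun ω => ∑ k ∈ range n, log (1 + X k ω j)) :=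
    integrable_finsetSum _ fun k _ => integrable_log_one_add hX ha hab k j
  calc log (K j) + n * ∫ ω, log (1 + X 0 ω j)
      = ∫ ω, (log (K j) + ∑ k ∈ range n, log (1 + X k ω j)) := by
        rw [integral_add (integrable_const _) hlog,
          integral_sum_range_comp_eq_mul hident (f := fun v => log (1 + v j)) (by fun_prop)
            (integrable_log_one_add hX ha hab 0 j)]
        simp
    _ ≤ ∫ ω, log (∑ i, K i * compoundReturn X n ω i) := by
        refine integral_mono_ae ((integrable_const _).add hlog)
          (integrable_log_portfolio hX ha hab hK hKj n) ?_
        filter_upwards [hab] with ω hω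
        have hpos k i : 0 < 1 + X k ω i := (ha i).trans_le (hω k i).1
        rw [← log_compoundReturn (hpos · j)]
        exact log_add_log_le_log_sum_mul hK (fun i => compoundReturn_pos (hpos · i) n) hKj

lemma integral_compoundReturn_div_le_one (hindep : iIndepFun X ℙ)
    (hident : ∀ k, IdentDistrib (X k) (X 0) ℙ ℙ) (hpos : ∀ᵐ ω, ∀ i, 0 < 1 + X 0 ω i)
    (hdom : ∀ i, i ≠ j → ∫ ω, (1 + X 0 ω i) / (1 + X 0 ω j) ≤ 1) (n : ℕ) (i : Fin m) :
    ∫ ω, compoundReturn X n ω i / compoundReturn X n ω j ≤ 1 := by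
  simp_rw [compoundReturn_div_compoundReturn]
  rw [integral_prod_range_comp_eq_pow hindep hident (f := fun v => (1 + v i) / (1 + v j))
    (by fun_prop)]
  refine pow_le_one₀ (integral_nonneg_of_ae ?_) ?_
  · filter_upwards [hpos] with ω hω using div_nonneg (hω i).le (hω j).le
  rcases eq_or_ne i j with rfl | hij
  · rw [integral_congr_ae (g := fun _ => 1) (by
      filter_upwards [hpos] with ω hω using div_self (hω i).ne')]
    simp
  · exact hdom i hij

lemma integral_sum_mul_compoundReturn_div_le_one (hindep : iIndepFun X ℙ)
    (hident : ∀ k, IdentDistrib (X k) (X 0) ℙ ℙ) (ha : ∀ i, 0 < a i)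
    (hab : ∀ᵐ ω, ∀ k i, a i ≤ 1 + X k ω i ∧ 1 + X k ω i ≤ b i)
    (hdom : ∀ i, i ≠ j → ∫ ω, (1 + X 0 ω i) / (1 + X 0 ω j) ≤ 1) (hK : K ∈ simplex m)
    (n : ℕ) : ∫ ω, ∑ i, K i * (compoundReturn X n ω i / compoundReturn X n ω j) ≤ 1 := by
  have hX k := (hident k).aemeasurable_fst
  have hpos : ∀ᵐ ω, ∀ i, 0 < 1 + X 0 ω i := hab.mono fun ω hω i => (ha i).trans_le (hω 0 i).1
  rw [integral_finsetSum _ fun i _ => (integrable_compoundReturn_div hX ha hab n i).const_mul _]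
  calc ∑ i, ∫ ω, K i * (compoundReturn X n ω i / compoundReturn X n ω j)
      ≤ ∑ i, K i * 1 := sum_le_sum fun i _ => by
        rw [integral_const_mul]
        exact mul_le_mul_of_nonneg_left
          (integral_compoundReturn_div_le_one hindep hident hpos hdom n i) (hK.1 i)
    _ = 1 := by simp [hK.2]

lemma integral_log_portfolio_le (hindep : iIndepFun X ℙ)
    (hident : ∀ k, IdentDistrib (X k) (X 0) ℙ ℙ) (ha : ∀ i, 0 < a i)
    (hab : ∀ᵐ ω, ∀ k i, a i ≤ 1 + X k ω i ∧ 1 + X k ω i ≤ b i)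
    (hdom : ∀ i, i ≠ j → ∫ ω, (1 + X 0 ω i) / (1 + X 0 ω j) ≤ 1) (hK : K ∈ simplex m)
    (hKj : 0 < K j) (n : ℕ) :
    ∫ ω, log (∑ i, K i * compoundReturn X n ω i) ≤ n * ∫ ω, log (1 + X 0 ω j) := by
  have hX k := (hident k).aemeasurable_fst
  have hlog : Integrable (fun ω => ∑ k ∈ range n, log (1 + X k ω j)) :=
    integrable_finsetSum _ fun k _ => integrable_log_one_add hX ha hab k j
  have hratio : Integrable
      (fun ω => ∑ i, K i * (compoundReturn X n ω i / compoundReturn X n ω j)) :=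
    integrable_finsetSum _ fun i _ => (integrable_compoundReturn_div hX ha hab n i).const_mul _
  have hrest : Integrable
      (fun ω => ∑ i, K i * (compoundReturn X n ω i / compoundReturn X n ω j) - 1) :=
    hratio.sub (integrable_const 1)
  calc ∫ ω, log (∑ i, K i * compoundReturn X n ω i)
      ≤ ∫ ω, (∑ k ∈ range n, log (1 + X k ω j) +
          (∑ i, K i * (compoundReturn X n ω i / compoundReturn X n ω j) - 1)) := by
        refine integral_mono_ae (integrable_log_portfolio hX ha hab hK.1 hKj n)
          (hlog.add hrest) ?_
        filter_upwards [hab] with ω hω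
        have hpos k i : 0 < 1 + X k ω i := (ha i).trans_le (hω k i).1
        rw [← log_compoundReturn (hpos · j)]
        exact log_sum_mul_le hK.1 (fun i => compoundReturn_pos (hpos · i) n) hKj
    _ = n * (∫ ω, log (1 + X 0 ω j)) +
          ((∫ ω, ∑ i, K i * (compoundReturn X n ω i / compoundReturn X n ω j)) - 1) := by
        rw [integral_add hlog hrest, integral_sub hratio (integrable_const _),
          integral_sum_range_comp_eq_mul hident
            (f := fun v => log (1 + v j)) (by fun_prop) (integrable_log_one_add hX ha hab 0 j)]
        simp
    _ ≤ n * ∫ ω, log (1 + X 0 ω j) := by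
        linarith [integral_sum_mul_compoundReturn_div_le_one hindep hident ha hab hdom hK n]

end Market

theorem market_portfolio_asymptotically_log_optimal_general
    {Ω : Type*} [MeasureSpace Ω] [IsProbabilityMeasure (ℙ : Measure Ω)]
    {m : ℕ}
    (X : ℕ → Ω → Fin m → ℝ)
    (hiid : iIndepFun X ℙ)
    (hident : ∀ k, IdentDistrib (X k) (X 0) ℙ ℙ)
    (Xmin Xmax : Fin m → ℝ)
    (hXmin : ∀ i, -1 < Xmin i)
    (hbdd : ∀ k, ∀ᵐ ω ∂(ℙ : Measure Ω), ∀ i, Xmin i ≤ X k ω i ∧ X k ω i ≤ Xmax i)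
    (j : Fin m)
    (hdom : ∀ i, i ≠ j → ∫ ω, (1 + X 0 ω i) / (1 + X 0 ω j) ≤ 1)
    (K : Fin m → ℝ) (hK : K ∈ simplex m) (hKpos : ∀ i, 0 < K i) :
    Tendsto (fun n : ℕ => elg X n K) atTop (𝓝 (∫ ω, Real.log (1 + X 0 ω j))) := by
  have ha i : 0 < 1 + Xmin i := by linarith [hXmin i]
  have hab : ∀ᵐ ω, ∀ k i, 1 + Xmin i ≤ 1 + X k ω i ∧ 1 + X k ω i ≤ 1 + Xmax i := by
    filter_upwards [ae_all_iff.2 hbdd] with ω hω k i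
    exact ⟨by linarith [(hω k i).1], by linarith [(hω k i).2]⟩
  exact tendsto_inv_mul_of_le_of_le
    (log_add_mul_le_integral_log_portfolio hident ha hab hK.1 (hKpos j))
    (integral_log_portfolio_le hiid hident ha hab hdom hK (hKpos j))

/-- **Market portfolio corollary.** If the market contains a dominant asset `j` and `K` is a
market portfolio with strictly positive weight on every asset, then buy and hold on `K` is
asymptotically log-optimal. -/
theorem market_portfolio_asymptotically_log_optimal
    {Ω : Type*} [MeasureSpace Ω] [IsProbabilityMeasure (ℙ : Measure Ω)]
    {m : ℕ} (hm : 2 ≤ m)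
    (X : ℕ → Ω → Fin m → ℝ)
    (hmeas : ∀ k, Measurable (X k))
    (hiid : iIndepFun X ℙ)
    (hident : ∀ k, IdentDistrib (X k) (X 0) ℙ ℙ)
    (Xmin Xmax : Fin m → ℝ)
    (hXmin : ∀ i, -1 < Xmin i)
    (hbdd : ∀ k, ∀ᵐ ω ∂(ℙ : Measure Ω), ∀ i, Xmin i ≤ X k ω i ∧ X k ω i ≤ Xmax i)
    (j : Fin m)
    (hdom : ∀ i, i ≠ j → ∫ ω, (1 + X 0 ω i) / (1 + X 0 ω j) ≤ 1)
    (K : Fin m → ℝ) (hK : K ∈ simplex m) (hKpos : ∀ i, 0 < K i) :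
    Tendsto (fun n : ℕ => elg X n K) atTop (𝓝 (∫ ω, Real.log (1 + X 0 ω j))) :=
  market_portfolio_asymptotically_log_optimal_general X hiid hident Xmin Xmax hXmin hbdd j hdom K hK
    hKpos
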